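/- Let G = (V,E) be a finite simple graph with |V| = n and let 1/3 ≤ α ≤ 1. Let v₁, v₂, …, vₙ be an enumeration of V with d(v₁) ≥ d(v₂) ≥ … ≥ d(vₙ). For a k-element set C = {v_{i₁}, …, v_{i_k}} with i₁ < … < i_k, identify C with the increasing index sequence (i₁, …, i_k). Suppose C is a k-element subset of V that maximizes cov_α among all k-element subsets, and that C is lexicographically smallest (with respect to these index sequences) among all such maximizers. Let v_j be the element of C of largest index, i.e., j = i_k. Then C is a dominating set of the induced subgraph G[{v₁, …, v_j}]: every vertex v_i with 1 ≤ i ≤ j is in C or has a neighbor in C. -/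

import Mathlib

/-!
Double counting gives `∑_{v ∈ S} d(v) = 2 m(S) + m(S, V∖S)`, hence
`cov_α(S) = α ∑_{v ∈ S} d(v) + (1 - 3α) m(S)` with `1 - 3α ≤ 0`. If some `v_i` with `i ≤ j` were
neither in `C` nor adjacent to `C`, exchanging `v_j` for `v_i` would not decrease the degree sum
and would not increase `m`, so the new set is again a maximizer. Its index sequence arises from
that of `C` by replacing `j` with the smaller index `i`, so it is lexicographically smaller,
contradicting the choice of `C`.
-/

open Finset

/-- Number of edges of `G` with both endpoints in `X`. -/
noncomputable def mIn {V : Type*} (G : SimpleGraph V) (X : Finset V) : ℕ :=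
  {e ∈ G.edgeSet | ∀ v ∈ e, v ∈ X}.ncard

/-- Number of edges of `G` with one endpoint in `X` and the other in `Y`. -/
noncomputable def mBtw {V : Type*} (G : SimpleGraph V) (X Y : Finset V) : ℕ :=
  {e ∈ G.edgeSet | ∃ u ∈ X, ∃ w ∈ Y, e = s(u, w)}.ncard

/-- `cov_α(S) = (1-α)·m(S) + α·m(S, V∖S)`. -/
noncomputable def cov {V : Type*} [Fintype V] [DecidableEq V] (G : SimpleGraph V) (α : ℝ)
    (S : Finset V) : ℝ :=
  (1 - α) * mIn G S + α * mBtw G S Sᶜ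

namespace Finset

variable {α : Type*} [LinearOrder α]

theorem sort_insert_of_forall_lt {a : α} {s : Finset α} (h : ∀ b ∈ s, a < b) :
    (insert a s).sort (· ≤ ·) = a :: s.sort (· ≤ ·) :=
  sort_insert _ (fun b hb => (h b hb).le) (fun ha => (h a ha).false)

theorem lex_sort_insert_of_lt {i j : α} (hij : i < j) {T : Finset α} (hiT : i ∉ T)
    (hjT : j ∉ T) :
    List.Lex (· < ·) ((insert i T).sort (· ≤ ·)) ((insert j T).sort (· ≤ ·)) := by
  induction T using Finset.induction_on_min with
  | empty => simp [hij]
  | insert a T haT ih =>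
    have hiT' : i ∉ T := fun h => hiT (mem_insert_of_mem h)
    have hjT' : j ∉ T := fun h => hjT (mem_insert_of_mem h)
    have hia : i ≠ a := fun h => hiT (h ▸ mem_insert_self a T)
    have below : ∀ x < a, ∀ b ∈ insert a T, x < b := fun x hxa =>
      forall_mem_insert _ _ _ |>.mpr ⟨hxa, fun b hb => hxa.trans (haT b hb)⟩
    have above : ∀ x, a < x → ∀ b ∈ insert x T, a < b := fun x hax =>
      forall_mem_insert _ _ _ |>.mpr ⟨hax, haT⟩
    rcases hia.lt_or_gt with hia | hai
    · rw [sort_insert_of_forall_lt (below i hia)]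
      rcases lt_or_gt_of_ne (fun h => hjT (h ▸ mem_insert_self a T) : j ≠ a) with hja | haj
      · rw [sort_insert_of_forall_lt (below j hja)]
        exact .rel hij
      · rw [insert_comm, sort_insert_of_forall_lt (above j haj)]
        exact .rel hia
    · rw [insert_comm, sort_insert_of_forall_lt (above i hai), insert_comm,
        sort_insert_of_forall_lt (above j (hai.trans hij))]
      exact .cons (ih hiT' hjT')

end Finset

namespace SimpleGraph

variable {V : Type*} (G : SimpleGraph V)

theorem ncard_sep_edgeSet [Fintype G.edgeSet] (P : Sym2 V → Prop) [DecidablePred P] :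
    {e ∈ G.edgeSet | P e}.ncard = #{e ∈ G.edgeFinset | P e} := by
  rw [← Set.ncard_coe_finset]
  congr
  ext
  simp

theorem mIn_mono [Finite V] {S T : Finset V} (h : S ⊆ T) : mIn G S ≤ mIn G T :=
  Set.ncard_le_ncard (fun _ ⟨he, hS⟩ => ⟨he, fun v hv => h (hS v hv)⟩) (Set.toFinite _)

theorem mIn_insert_of_forall_not_adj [DecidableEq V] {S : Finset V} {v : V}
    (hv : ∀ u ∈ S, ¬ G.Adj v u) : mIn G (insert v S) = mIn G S := by
  unfold mIn
  congr 1
  ext e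
  refine and_congr_right fun he => ⟨fun h => ?_, fun h w hw => mem_insert_of_mem (h w hw)⟩
  induction e with
  | _ a b =>
    simp only [Sym2.mem_iff, forall_eq_or_imp, forall_eq, mem_insert] at h ⊢
    rw [mem_edgeSet] at he
    rcases h with ⟨rfl | ha, rfl | hb⟩
    · exact absurd he G.irrefl
    · exact absurd he (hv b hb)
    · exact absurd he.symm (hv a ha)
    · exact ⟨ha, hb⟩

variable [Fintype V] [DecidableEq V] [DecidableRel G.Adj]

theorem sum_degree_eq_two_mul_mIn_add_mBtw (S : Finset V) :
    ∑ v ∈ S, G.degree v = 2 * mIn G S + mBtw G S Sᶜ := by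
  classical
  have count : ∀ e ∈ G.edgeFinset, #{v ∈ S | v ∈ e} =
      2 * (if ∀ v ∈ e, v ∈ S then 1 else 0) +
        if ∃ u ∈ S, ∃ w ∈ Sᶜ, e = s(u, w) then 1 else 0 := by
    intro e he
    induction e with
    | _ a b =>
      have hab : a ≠ b := G.ne_of_adj (mem_edgeFinset.mp he)
      by_cases ha : a ∈ S <;> by_cases hb : b ∈ S <;>
        simp [Sym2.mem_iff, filter_or, filter_eq', ha, hb, hab] <;> grind
  calc ∑ v ∈ S, G.degree v
      = ∑ v ∈ S, #(G.edgeFinset.bipartiteAbove (· ∈ ·) v) := by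
        simp [bipartiteAbove, ← card_incidenceFinset_eq_degree, incidenceFinset_eq_filter]
    _ = ∑ e ∈ G.edgeFinset, #{v ∈ S | v ∈ e} :=
        sum_card_bipartiteAbove_eq_sum_card_bipartiteBelow _
    _ = 2 * mIn G S + mBtw G S Sᶜ := by
        rw [sum_congr rfl count, sum_add_distrib, ← mul_sum, sum_boole, sum_boole, mIn, mBtw,
          ncard_sep_edgeSet, ncard_sep_edgeSet]
        simp

theorem cov_eq_sum_degree_add (α : ℝ) (S : Finset V) :
    cov G α S = α * ∑ v ∈ S, (G.degree v : ℝ) + (1 - 3 * α) * mIn G S := by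
  have h := congrArg (Nat.cast : ℕ → ℝ) (G.sum_degree_eq_two_mul_mIn_add_mBtw S)
  push_cast at h
  rw [cov, h]
  ring

theorem cov_le_cov_insert_erase {α : ℝ} (hα : 1 / 3 ≤ α) {C : Finset V} {u v : V} (hu : u ∈ C)
    (hv : v ∉ C) (hdeg : G.degree u ≤ G.degree v) (hnadj : ∀ w ∈ C, ¬ G.Adj v w) :
    cov G α C ≤ cov G α (insert v (C.erase u)) := by
  have hmIn : mIn G (insert v (C.erase u)) ≤ mIn G C := by
    rw [G.mIn_insert_of_forall_not_adj fun w hw => hnadj w (mem_of_mem_erase hw)]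
    exact G.mIn_mono (erase_subset u C)
  have hsum : ∑ w ∈ C, (G.degree w : ℝ) ≤ ∑ w ∈ insert v (C.erase u), (G.degree w : ℝ) := by
    rw [← add_sum_erase C _ hu, sum_insert fun h => hv (mem_of_mem_erase h)]
    gcongr
  rw [cov_eq_sum_degree_add, cov_eq_sum_degree_add]
  exact add_le_add (mul_le_mul_of_nonneg_left hsum (by linarith))
    (mul_le_mul_of_nonpos_left (by exact_mod_cast hmIn) (by linarith))

end SimpleGraph

theorem stmt16_general {V : Type*} [Fintype V] [DecidableEq V] (G : SimpleGraph V)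
    [DecidableRel G.Adj] (α : ℝ) (hα0 : 1 / 3 ≤ α)
    (e : Fin (Fintype.card V) ≃ V)
    (hsorted : ∀ i j : Fin (Fintype.card V), i ≤ j → G.degree (e j) ≤ G.degree (e i))
    (k : ℕ) (C : Finset V) (hCcard : C.card = k) (hCne : C.Nonempty)
    (hmax : ∀ C' : Finset V, C'.card = k → cov G α C' ≤ cov G α C)
    (hlex : ∀ C' : Finset V, C'.card = k → cov G α C' = cov G α C → C' ≠ C →
      List.Lex (· < ·) ((C.image e.symm).sort (· ≤ ·)) ((C'.image e.symm).sort (· ≤ ·)))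
    (j : Fin (Fintype.card V)) (hj : j = (C.image e.symm).max' (hCne.image e.symm)) :
    ∀ i : Fin (Fintype.card V), i ≤ j → e i ∈ C ∨ ∃ u ∈ C, G.Adj (e i) u := by
  intro i hij
  by_contra! ⟨hiC, hnadj⟩
  set I := C.image e.symm
  have hjI : j ∈ I := hj ▸ I.max'_mem _
  have hjC : e j ∈ C := by simpa [I, Equiv.symm_apply_eq] using hjI
  have hiI : i ∉ I := by simpa [I, Equiv.symm_apply_eq] using hiC
  have hij : i < j := lt_of_le_of_ne hij fun h => hiI (h ▸ hjI)
  set C' := insert (e i) (C.erase (e j))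
  have hC'card : C'.card = k := by
    rw [card_insert_of_notMem fun h => hiC (mem_of_mem_erase h), card_erase_of_mem hjC,
      Nat.sub_add_cancel (card_pos.mpr hCne), hCcard]
  have hcov : cov G α C' = cov G α C :=
    (hmax C' hC'card).antisymm
      (G.cov_le_cov_insert_erase hα0 hjC hiC (hsorted i j hij.le) hnadj)
  have hne : C' ≠ C := fun h => hiC (h ▸ mem_insert_self _ _)
  have hC' : C'.image e.symm = insert i (I.erase j) := by
    simp [C', I, image_insert, image_erase e.symm.injective]
  refine (List.Lex.asymm _).asymm _ _ (hlex C' hC'card hcov hne) ?_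
  rw [hC']
  simpa only [insert_erase hjI] using
    lex_sort_insert_of_lt hij (fun h => hiI (mem_of_mem_erase h)) (notMem_erase j I)

theorem stmt16 {V : Type*} [Fintype V] [DecidableEq V] (G : SimpleGraph V)
    [DecidableRel G.Adj] (α : ℝ) (hα0 : 1 / 3 ≤ α) (hα1 : α ≤ 1)
    (e : Fin (Fintype.card V) ≃ V)
    (hsorted : ∀ i j : Fin (Fintype.card V), i ≤ j → G.degree (e j) ≤ G.degree (e i))
    (k : ℕ) (C : Finset V) (hCcard : C.card = k) (hCne : C.Nonempty)
    (hmax : ∀ C' : Finset V, C'.card = k → cov G α C' ≤ cov G α C)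
    (hlex : ∀ C' : Finset V, C'.card = k → cov G α C' = cov G α C → C' ≠ C →
      List.Lex (· < ·) ((C.image e.symm).sort (· ≤ ·)) ((C'.image e.symm).sort (· ≤ ·)))
    (j : Fin (Fintype.card V)) (hj : j = (C.image e.symm).max' (hCne.image e.symm)) :
    ∀ i : Fin (Fintype.card V), i ≤ j → e i ∈ C ∨ ∃ u ∈ C, G.Adj (e i) u :=
  stmt16_general G α hα0 e hsorted k C hCcard hCne hmax hlex j hj
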